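/- arXiv:2406.07223 — 2 statements merged into one kernel-verified Lean document; each statement's English description precedes it below -/
import Mathlib

section
/- Let p be a prime and m ≥ 1. The polynomial x² + 3 has a root in the finite field F_{p^m} if and only if m is even, or p ≡ 1 (mod 6), or p ∈ {2, 3}. -/
/-!
For odd characteristic `≠ 3`, `(s - 1) / 2` and `2ω + 1` exchange square roots of `-3` with roots
of `X² + X + 1 = Φ₃`, i.e. with primitive cube roots of unity. Since `𝔽_qˣ` is cyclic of order
`q - 1`, these exist iff `3 ∣ q - 1`, and for `q = p ^ m` this happens iff `p ≡ 1 (mod 3)` or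
`m` is even. In characteristic 2 and 3, `1` and `0` are roots of `x² + 3`.
-/

open Polynomial

theorem IsCyclic.exists_orderOf_eq_iff {G : Type*} [Group G] [Finite G] [IsCyclic G] {d : ℕ} :
    (∃ g : G, orderOf g = d) ↔ d ∣ Nat.card G := by
  refine ⟨fun ⟨g, hg⟩ ↦ hg ▸ orderOf_dvd_natCard g, fun hd ↦ ?_⟩
  obtain ⟨g, hg⟩ := IsCyclic.exists_ofOrder_eq_natCard (α := G)
  exact ⟨g ^ (orderOf g / d), orderOf_pow_orderOf_div (hg ▸ Nat.card_pos.ne') (hg ▸ hd)⟩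

theorem FiniteField.exists_isPrimitiveRoot_iff {F : Type*} [Field F] [Finite F] {n : ℕ}
    (hn : n ≠ 0) : (∃ ζ : F, IsPrimitiveRoot ζ n) ↔ n ∣ Nat.card F - 1 := by
  rw [← Nat.card_units, ← IsCyclic.exists_orderOf_eq_iff]
  constructor
  · rintro ⟨ζ, hζ⟩
    exact ⟨Units.mk0 ζ (hζ.ne_zero hn), by rw [← orderOf_units, Units.val_mk0, hζ.eq_orderOf]⟩
  · rintro ⟨u, hu⟩
    exact ⟨u, IsPrimitiveRoot.iff_orderOf.mpr (orderOf_units.trans hu)⟩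

theorem isSquare_neg_three_iff_exists_sq_add_self_add_one_eq_zero {F : Type*} [Field F]
    (h2 : (2 : F) ≠ 0) : IsSquare (-3 : F) ↔ ∃ ω : F, ω ^ 2 + ω + 1 = 0 := by
  constructor
  · rintro ⟨s, hs⟩
    exact ⟨(s - 1) / 2, by field_simp; linear_combination -hs⟩
  · rintro ⟨ω, hω⟩
    exact ⟨2 * ω + 1, by linear_combination -4 * hω⟩

theorem isSquare_neg_three_iff_exists_isPrimitiveRoot {F : Type*} [Field F]
    (h2 : (2 : F) ≠ 0) (h3 : (3 : F) ≠ 0) : IsSquare (-3 : F) ↔ ∃ ω : F, IsPrimitiveRoot ω 3 := by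
  have : NeZero ((3 : ℕ) : F) := ⟨mod_cast h3⟩
  simp only [← isRoot_cyclotomic_iff, cyclotomic_three, IsRoot.def, eval_add, eval_pow, eval_X,
    eval_one]
  exact isSquare_neg_three_iff_exists_sq_add_self_add_one_eq_zero h2

theorem FiniteField.isSquare_neg_three_iff {F : Type*} [Field F] [Finite F]
    (h2 : (2 : F) ≠ 0) (h3 : (3 : F) ≠ 0) : IsSquare (-3 : F) ↔ 3 ∣ Nat.card F - 1 :=
  (isSquare_neg_three_iff_exists_isPrimitiveRoot h2 h3).trans
    (FiniteField.exists_isPrimitiveRoot_iff three_ne_zero)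

theorem Nat.three_dvd_pow_sub_one_iff {p : ℕ} (hp : ¬ 3 ∣ p) (m : ℕ) :
    3 ∣ p ^ m - 1 ↔ Even m ∨ p % 3 = 1 := by
  have hpm : 1 ≤ p ^ m := Nat.one_le_pow _ _ (Nat.pos_of_ne_zero (by rintro rfl; simp at hp))
  rw [← ZMod.natCast_eq_zero_iff, Nat.cast_sub hpm, Nat.cast_pow, Nat.cast_one, sub_eq_zero,
    ← ZMod.natCast_mod p 3]
  obtain h | h : p % 3 = 1 ∨ p % 3 = 2 := by omega
  · simp [h]
  · rw [h, show ((2 : ℕ) : ZMod 3) = -1 from rfl, neg_one_pow_eq_one_iff_even (by decide)]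
    simp

theorem exists_sq_add_eq_zero_iff_isSquare_neg {R : Type*} [Ring R] (a : R) :
    (∃ x : R, x ^ 2 + a = 0) ↔ IsSquare (-a) := by
  simp only [IsSquare, add_eq_zero_iff_eq_neg, sq, eq_comm]

/-- Let `p` be a prime and `m ≥ 1`. The polynomial `x² + 3` has a root in the
finite field `F_{p^m}` if and only if `m` is even, or `p ≡ 1 (mod 6)`, or `p ∈ {2, 3}`. -/
theorem root_of_x_sq_add_three_iff (p m : ℕ) [Fact p.Prime] (hm : 1 ≤ m) :
    (∃ x : GaloisField p m, x ^ 2 + 3 = 0) ↔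
      (Even m ∨ p % 6 = 1 ∨ p = 2 ∨ p = 3) := by
  have hp : p.Prime := Fact.out
  obtain rfl | h2 := eq_or_ne p 2
  · refine iff_of_true ⟨1, ?_⟩ (by simp)
    linear_combination 2 * (CharTwo.two_eq_zero : (2 : GaloisField 2 m) = 0)
  obtain rfl | h3 := eq_or_ne p 3
  · exact iff_of_true ⟨0, by simpa using CharP.ofNat_eq_zero (GaloisField 3 m) 3⟩ (by simp)
  have h2F : (2 : GaloisField p m) ≠ 0 :=
    mod_cast CharP.cast_ne_zero_of_ne_of_prime _ Nat.prime_two h2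
  have h3F : (3 : GaloisField p m) ≠ 0 :=
    mod_cast CharP.cast_ne_zero_of_ne_of_prime _ Nat.prime_three h3
  have h3p : ¬ 3 ∣ p := fun h ↦ h3 ((Nat.prime_dvd_prime_iff_eq Nat.prime_three hp).mp h).symm
  have hodd : p % 2 = 1 := Nat.odd_iff.mp (hp.odd_of_ne_two h2)
  rw [exists_sq_add_eq_zero_iff_isSquare_neg, FiniteField.isSquare_neg_three_iff h2F h3F,
    GaloisField.card p m (by omega), Nat.three_dvd_pow_sub_one_iff h3p, Nat.even_iff]
  omega
end

section
/- For n = 1, the scheme Y⁰ = {Ā = B̄ = 0} ⊂ P², where Ā = u₀³ + u₁³ + 3u₁²u₂ + 3u₁u₂² + 9u₂³ and B̄ = u₀³ + u₁³ - u₁²u₂ + 3u₁u₂² - 3u₂³, has exactly three irreducible components: Y⁰₁ = {u₀ = u₁² + 3u₂² = 0}, Y⁰₂ = {u₂ = u₀² - u₀u₁ + u₁² = 0}, and Y⁰₃ = {u₂ = u₀ + u₁ = 0}. -/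
/-!
Since `Ā - B̄ = 4 u₂ (u₁² + 3u₂²)`, a prime `q ⊇ (Ā, B̄)` contains `u₂` or `u₁² + 3u₂²`. Modulo
`u₂` we have `Ā ≡ u₀³ + u₁³ = (u₀ + u₁)(u₀² - u₀u₁ + u₁²)`, and modulo `u₁² + 3u₂²` we have
`Ā ≡ u₀³`, so `q` contains one of the three ideals, each of which contains `Ā` and `B̄`.

An ideal `I = (u_l, u_i² + β u_i u_j + γ u_j²)` with `x² + βx + γ` irreducible over `k` is prime:
modulo `I` every polynomial reduces to `a(u_j) u_i + b(u_j)`, and the map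
`u_j ↦ t, u_i ↦ ω t, u_l ↦ 0` to `K[t]`, with `ω ∉ k` a root of `x² + βx + γ` in the algebraic
closure, kills `I` and is injective on these normal forms. As `-3` is not a square, this applies to
the first two ideals; the third, `(u₂, u₀ + u₁)`, is treated in the same way with `u₀ ↦ -t`.
The three primes are pairwise incomparable, as evaluation at the points `(0 : 2ω - 1 : 1)`,
`(ω : 1 : 0)` and `(1 : -1 : 0)` (where `ω² - ω + 1 = 0`) shows, so they are exactly the minimal primes.
-/

open MvPolynomial

/-- `Ā = u₀³ + u₁³ + 3u₁²u₂ + 3u₁u₂² + 9u₂³`. -/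
noncomputable def A₀ (k : Type) [Field k] : MvPolynomial (Fin 3) k :=
  X 0 ^ 3 + X 1 ^ 3 + 3 * X 1 ^ 2 * X 2 + 3 * X 1 * X 2 ^ 2 + 9 * X 2 ^ 3

/-- `B̄ = u₀³ + u₁³ - u₁²u₂ + 3u₁u₂² - 3u₂³`. -/
noncomputable def B₀ (k : Type) [Field k] : MvPolynomial (Fin 3) k :=
  X 0 ^ 3 + X 1 ^ 3 - X 1 ^ 2 * X 2 + 3 * X 1 * X 2 ^ 2 - 3 * X 2 ^ 3

theorem Ideal.span_pair_le_iff {R : Type*} [Semiring R] {I : Ideal R} {a b : R} :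
    Ideal.span {a, b} ≤ I ↔ a ∈ I ∧ b ∈ I :=
  Ideal.span_le.trans Set.pair_subset_iff

theorem Ideal.minimalPrimes_eq_of_isAntichain {R : Type*} [CommSemiring R] {I : Ideal R}
    {S : Set (Ideal R)} (hS : ∀ p ∈ S, p.IsPrime ∧ I ≤ p) (hanti : IsAntichain (· ≤ ·) S)
    (hcover : ∀ q : Ideal R, q.IsPrime → I ≤ q → ∃ p ∈ S, p ≤ q) :
    I.minimalPrimes = S := by
  ext q
  constructor
  · rintro ⟨⟨hq, hIq⟩, hmin⟩
    obtain ⟨p, hp, hpq⟩ := hcover q hq hIq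
    rwa [le_antisymm (hmin (hS p hp) hpq) hpq]
  · intro hq
    refine ⟨hS q hq, fun y ⟨hy, hIy⟩ hyq => ?_⟩
    obtain ⟨p, hp, hpy⟩ := hcover y hy hIy
    rwa [← hanti.eq hp hq (hpy.trans hyq)]

theorem IsAlgClosed.exists_sq_add_mul_add_eq_zero {K : Type*} [Field K] [IsAlgClosed K]
    (b c : K) : ∃ x : K, x ^ 2 + b * x + c = 0 := by
  obtain ⟨x, hx⟩ := IsAlgClosed.exists_root
    (Polynomial.C 1 * Polynomial.X ^ 2 + Polynomial.C b * Polynomial.X + Polynomial.C c)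
    (by rw [Polynomial.degree_quadratic one_ne_zero]; decide)
  exact ⟨x, by simpa using hx⟩

theorem Polynomial.eq_zero_of_map_mul_C_add_map_eq_zero {k K : Type*} [Field k] [Field K]
    [Algebra k K] {z : K} (hz : ∀ c : k, algebraMap k K c ≠ z) {a b : Polynomial k}
    (h : a.map (algebraMap k K) * Polynomial.C z + b.map (algebraMap k K) = 0) :
    a = 0 ∧ b = 0 := by
  have hcoeff (n : ℕ) : algebraMap k K (a.coeff n) * z + algebraMap k K (b.coeff n) = 0 := by
    simpa using congrArg (Polynomial.coeff · n) h
  have ha : a = 0 := by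
    ext n
    rw [Polynomial.coeff_zero]
    by_contra han
    apply hz (-b.coeff n / a.coeff n)
    rw [map_div₀, map_neg, div_eq_iff ((_root_.map_ne_zero _).2 han)]
    linear_combination -hcoeff n
  exact ⟨ha, Polynomial.ext fun n => by simpa [ha] using hcoeff n⟩

namespace MvPolynomial

theorem exists_eq_aeval_mul_add_aeval {σ k A : Type*} [CommRing k] [CommRing A] [Algebra k A]
    (ψ : MvPolynomial σ k →ₐ[k] A) {i j : σ} (hψ : ∀ n, n ≠ i → n ≠ j → ψ (X n) = 0)
    {r s : Polynomial k}
    (hi : ψ (X i) ^ 2 = Polynomial.aeval (ψ (X j)) r + Polynomial.aeval (ψ (X j)) s * ψ (X i))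
    (P : MvPolynomial σ k) :
    ∃ a b : Polynomial k,
      ψ P = Polynomial.aeval (ψ (X j)) a * ψ (X i) + Polynomial.aeval (ψ (X j)) b := by
  induction P using MvPolynomial.induction_on with
  | C c => exact ⟨0, Polynomial.C c, by simp⟩
  | add p q hp hq =>
    obtain ⟨a, b, hab⟩ := hp
    obtain ⟨c, d, hcd⟩ := hq
    exact ⟨a + c, b + d, by simp only [map_add, hab, hcd]; ring⟩
  | mul_X p n hp =>
    obtain ⟨a, b, hab⟩ := hp
    by_cases hni : n = i
    · subst hni
      refine ⟨a * s + b, a * r, ?_⟩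
      simp only [map_mul, map_add, hab]
      linear_combination Polynomial.aeval (ψ (X j)) a * hi
    by_cases hnj : n = j
    · subst hnj
      refine ⟨a * Polynomial.X, b * Polynomial.X, ?_⟩
      simp only [map_mul, hab, Polynomial.aeval_X]
      ring
    · exact ⟨0, 0, by simp [hψ n hni hnj]⟩

theorem isPrime_of_le_ker_of_sq_sub_mem {σ k D : Type*} [CommRing k] [CommRing D] [IsDomain D]
    [Algebra k D] {I : Ideal (MvPolynomial σ k)} {i j : σ}
    (hI : ∀ n, n ≠ i → n ≠ j → X n ∈ I) {r s : Polynomial k}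
    (hi : X i ^ 2 - (Polynomial.aeval (X j) r + Polynomial.aeval (X j) s * X i) ∈ I)
    (φ : MvPolynomial σ k →ₐ[k] D) (hφI : I ≤ RingHom.ker φ)
    (hφ : ∀ a b : Polynomial k,
      φ (Polynomial.aeval (X j) a * X i + Polynomial.aeval (X j) b) = 0 →
        Polynomial.aeval (X j) a * X i + Polynomial.aeval (X j) b ∈ I) :
    I.IsPrime := by
  suffices RingHom.ker φ ≤ I from le_antisymm this hφI ▸ RingHom.ker_isPrime φ
  intro P hP
  let ψ := Ideal.Quotient.mkₐ k I
  have hψ {Q R : MvPolynomial σ k} : ψ Q = ψ R ↔ Q - R ∈ I := by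
    rw [Ideal.Quotient.mkₐ_eq_mk, Ideal.Quotient.eq]
  obtain ⟨a, b, hab⟩ := exists_eq_aeval_mul_add_aeval ψ (i := i) (j := j) (r := r) (s := s)
    (fun n hni hnj => by rw [← map_zero ψ, hψ, sub_zero]; exact hI n hni hnj)
    (by simpa only [Polynomial.aeval_algHom_apply, ← map_pow, ← map_mul, ← map_add, hψ] using hi)
    P
  simp only [Polynomial.aeval_algHom_apply, ← map_mul, ← map_add, hψ] at hab
  have hQ := hφI hab
  rw [RingHom.mem_ker, map_sub, RingHom.mem_ker.1 hP, zero_sub, neg_eq_zero] at hQ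
  simpa using I.add_mem hab (hφ a b hQ)

variable {k : Type*} [Field k]

theorem isPrime_span_X_sq_add_mul_add {i j l : Fin 3} (hij : i ≠ j) (hil : i ≠ l) (hjl : j ≠ l)
    {β γ : k} (hroot : ∀ x : k, x ^ 2 + β * x + γ ≠ 0) :
    (Ideal.span {X l, X i ^ 2 + C β * X i * X j + C γ * X j ^ 2} :
      Ideal (MvPolynomial (Fin 3) k)).IsPrime := by
  let K := AlgebraicClosure k
  obtain ⟨ω, hω⟩ :=
    IsAlgClosed.exists_sq_add_mul_add_eq_zero (algebraMap k K β) (algebraMap k K γ)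
  have hωk : ∀ c : k, algebraMap k K c ≠ ω := by
    rintro c rfl
    exact hroot c ((algebraMap k K).injective (by simpa using hω))
  let φ : MvPolynomial (Fin 3) k →ₐ[k] Polynomial K := aeval fun n =>
    if n = i then Polynomial.C ω * Polynomial.X else if n = j then Polynomial.X else 0
  have hφi : φ (X i) = Polynomial.C ω * Polynomial.X := by simp [φ]
  have hφj : φ (X j) = Polynomial.X := by simp [φ, hij.symm]
  refine isPrime_of_le_ker_of_sq_sub_mem (i := i) (j := j)
    (r := -Polynomial.C γ * Polynomial.X ^ 2) (s := -Polynomial.C β * Polynomial.X)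
    (fun n hni hnj => Ideal.subset_span (by simp [show n = l by omega]))
    (Ideal.subset_span (Set.mem_insert_of_mem _ (by simp; ring))) φ ?_ fun a b hab => ?_
  · refine Ideal.span_pair_le_iff.2 ⟨by simp [φ, hil.symm, hjl.symm], ?_⟩
    have hCω := congrArg Polynomial.C hω
    simp only [map_add, map_mul, map_pow, map_zero] at hCω
    simp only [RingHom.mem_ker, map_add, map_mul, map_pow, algHom_C, hφi, hφj,
      Polynomial.algebraMap_apply]
    linear_combination Polynomial.X ^ 2 * hCω
  · rw [map_add, map_mul, ← Polynomial.aeval_algHom_apply, ← Polynomial.aeval_algHom_apply,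
      hφj, hφi, Polynomial.aeval_X_left_eq_map, Polynomial.aeval_X_left_eq_map] at hab
    obtain ⟨haX, rfl⟩ := Polynomial.eq_zero_of_map_mul_C_add_map_eq_zero hωk
      (a := a * Polynomial.X) (b := b)
      (by rw [Polynomial.map_mul, Polynomial.map_X]; linear_combination hab)
    obtain rfl : a = 0 := (mul_eq_zero.1 haX).resolve_right Polynomial.X_ne_zero
    simp

theorem isPrime_span_X_add_C_mul {i j l : Fin 3} (hij : i ≠ j) (hil : i ≠ l) (hjl : j ≠ l)
    (c : k) : (Ideal.span {X l, X i + C c * X j} : Ideal (MvPolynomial (Fin 3) k)).IsPrime := by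
  let φ : MvPolynomial (Fin 3) k →ₐ[k] Polynomial k := aeval fun n =>
    if n = i then -Polynomial.C c * Polynomial.X else if n = j then Polynomial.X else 0
  have hφi : φ (X i) = -Polynomial.C c * Polynomial.X := by simp [φ]
  have hφj : φ (X j) = Polynomial.X := by simp [φ, hij.symm]
  have hlin : X i + C c * X j ∈ Ideal.span {X l, X i + C c * X j} :=
    Ideal.subset_span (Set.mem_insert_of_mem _ rfl)
  refine isPrime_of_le_ker_of_sq_sub_mem (i := i) (j := j)
    (r := Polynomial.C (c ^ 2) * Polynomial.X ^ 2) (s := 0)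
    (fun n hni hnj => Ideal.subset_span (by simp [show n = l by omega]))
    ?_ φ ?_ fun a b hab => ?_
  · convert Ideal.mul_mem_left _ (X i - C c * X j) hlin using 1
    simp; ring
  · refine Ideal.span_pair_le_iff.2 ⟨by simp [φ, hil.symm, hjl.symm], ?_⟩
    simp [hφi, hφj]
  · rw [map_add, map_mul, ← Polynomial.aeval_algHom_apply, ← Polynomial.aeval_algHom_apply,
      hφj, hφi, Polynomial.aeval_X_left_apply, Polynomial.aeval_X_left_apply] at hab
    obtain rfl : b = Polynomial.C c * Polynomial.X * a := by linear_combination hab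
    convert Ideal.mul_mem_left _ (Polynomial.aeval (X j) a) hlin using 1
    simp; ring

end MvPolynomial

section Y0

variable (k : Type) [Field k]

noncomputable def Y0₁ : Ideal (MvPolynomial (Fin 3) k) := Ideal.span {X 0, X 1 ^ 2 + 3 * X 2 ^ 2}

noncomputable def Y0₂ : Ideal (MvPolynomial (Fin 3) k) :=
  Ideal.span {X 2, X 0 ^ 2 - X 0 * X 1 + X 1 ^ 2}

noncomputable def Y0₃ : Ideal (MvPolynomial (Fin 3) k) := Ideal.span {X 2, X 0 + X 1}

theorem span_A₀_B₀_le_Y0 :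
    ∀ p ∈ ({Y0₁ k, Y0₂ k, Y0₃ k} : Set (Ideal (MvPolynomial (Fin 3) k))),
      Ideal.span {A₀ k, B₀ k} ≤ p := by
  rintro p (rfl | rfl | rfl) <;> refine Ideal.span_pair_le_iff.2 ⟨?_, ?_⟩ <;>
    refine Ideal.mem_span_pair.2 ?_
  · exact ⟨X 0 ^ 2, X 1 + 3 * X 2, by rw [A₀]; ring⟩
  · exact ⟨X 0 ^ 2, X 1 - X 2, by rw [B₀]; ring⟩
  · exact ⟨3 * X 1 ^ 2 + 3 * X 1 * X 2 + 9 * X 2 ^ 2, X 0 + X 1, by rw [A₀]; ring⟩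
  · exact ⟨-X 1 ^ 2 + 3 * X 1 * X 2 - 3 * X 2 ^ 2, X 0 + X 1, by rw [B₀]; ring⟩
  · exact ⟨3 * X 1 ^ 2 + 3 * X 1 * X 2 + 9 * X 2 ^ 2, X 0 ^ 2 - X 0 * X 1 + X 1 ^ 2,
      by rw [A₀]; ring⟩
  · exact ⟨-X 1 ^ 2 + 3 * X 1 * X 2 - 3 * X 2 ^ 2, X 0 ^ 2 - X 0 * X 1 + X 1 ^ 2,
      by rw [B₀]; ring⟩

variable {k}

theorem isPrime_Y0₁ (hk : ∀ x : k, x ^ 2 ≠ -3) : (Y0₁ k).IsPrime := by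
  rw [Y0₁]
  convert isPrime_span_X_sq_add_mul_add (k := k) (i := 1) (j := 2) (l := 0) (by decide)
    (by decide) (by decide) (β := 0) (γ := 3) fun x hx => hk x (by linear_combination hx)
    using 4
  rw [map_zero, zero_mul, zero_mul, add_zero, map_ofNat]

theorem isPrime_Y0₂ (hk : ∀ x : k, x ^ 2 ≠ -3) : (Y0₂ k).IsPrime := by
  rw [Y0₂]
  convert isPrime_span_X_sq_add_mul_add (k := k) (i := 0) (j := 1) (l := 2) (by decide)
    (by decide) (by decide) (β := -1) (γ := 1)
    fun x hx => hk (2 * x - 1) (by linear_combination 4 * hx) using 4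
  rw [map_neg, map_one, one_mul]
  ring

theorem isPrime_Y0₃ : (Y0₃ k).IsPrime := by
  rw [Y0₃]
  convert isPrime_span_X_add_C_mul (k := k) (i := 0) (j := 1) (l := 2) (by decide)
    (by decide) (by decide) 1 using 4
  rw [map_one, one_mul]

theorem exists_Y0_le_of_isPrime (h2 : (2 : k) ≠ 0) {q : Ideal (MvPolynomial (Fin 3) k)}
    (hq : q.IsPrime) (hIq : Ideal.span {A₀ k, B₀ k} ≤ q) :
    ∃ p ∈ ({Y0₁ k, Y0₂ k, Y0₃ k} : Set (Ideal (MvPolynomial (Fin 3) k))), p ≤ q := by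
  obtain ⟨hA, hB⟩ := Ideal.span_pair_le_iff.1 hIq
  have h4 : (4 : k) ≠ 0 := by
    rw [show (4 : k) = 2 * 2 by norm_num]
    exact mul_ne_zero h2 h2
  have hC4 : C (4 : k)⁻¹ * 4 = (1 : MvPolynomial (Fin 3) k) := by
    rw [← map_ofNat C 4, ← map_mul, inv_mul_cancel₀ h4, map_one]
  have hX₂Q : X 2 * (X 1 ^ 2 + 3 * X 2 ^ 2) ∈ q := by
    convert q.mul_mem_left (C 4⁻¹) (q.sub_mem hA hB) using 1
    rw [A₀, B₀]
    linear_combination -(X 2 * (X 1 ^ 2 + 3 * X 2 ^ 2)) * hC4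
  rcases hq.mem_or_mem hX₂Q with hX₂ | hQ
  · have hcube : (X 0 + X 1) * (X 0 ^ 2 - X 0 * X 1 + X 1 ^ 2) ∈ q := by
      convert q.sub_mem hA (q.mul_mem_left (3 * X 1 ^ 2 + 3 * X 1 * X 2 + 9 * X 2 ^ 2) hX₂)
        using 1
      rw [A₀]
      ring
    rcases hq.mem_or_mem hcube with h | h
    · exact ⟨Y0₃ k, by simp, Ideal.span_pair_le_iff.2 ⟨hX₂, h⟩⟩
    · exact ⟨Y0₂ k, by simp, Ideal.span_pair_le_iff.2 ⟨hX₂, h⟩⟩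
  · have hX₀ : X 0 ^ 3 ∈ q := by
      convert q.sub_mem hA (q.mul_mem_left (X 1 + 3 * X 2) hQ) using 1
      rw [A₀]
      ring
    exact ⟨Y0₁ k, by simp, Ideal.span_pair_le_iff.2 ⟨hq.mem_of_pow_mem 3 hX₀, hQ⟩⟩

theorem isAntichain_Y0 (h3 : (3 : k) ≠ 0) :
    IsAntichain (· ≤ ·) ({Y0₁ k, Y0₂ k, Y0₃ k} : Set (Ideal (MvPolynomial (Fin 3) k))) := by
  let K := AlgebraicClosure k
  obtain ⟨ω, hω⟩ := IsAlgClosed.exists_sq_add_mul_add_eq_zero (-1 : K) 1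
  have hω₀ : ω ≠ 0 := by rintro rfl; simp at hω
  have hω₁ : ω + 1 ≠ 0 := fun h => h3 <| (algebraMap k K).injective <| by
    simp only [map_ofNat, map_zero]
    linear_combination hω - (ω - 2) * h
  have hv₁ : Y0₁ k ≤ RingHom.ker (aeval (R := k) ![(0 : K), 2 * ω - 1, 1]) :=
    Ideal.span_pair_le_iff.2 ⟨by simp, by simp; linear_combination 4 * hω⟩
  have hv₂ : Y0₂ k ≤ RingHom.ker (aeval (R := k) ![ω, 1, 0]) :=
    Ideal.span_pair_le_iff.2 ⟨by simp, by simp; linear_combination hω⟩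
  have hv₃ : Y0₃ k ≤ RingHom.ker (aeval (R := k) ![(1 : k), -1, 0]) :=
    Ideal.span_pair_le_iff.2 ⟨by simp, by simp⟩
  have hfst {a b : MvPolynomial (Fin 3) k} : a ∈ Ideal.span {a, b} := Ideal.subset_span (by simp)
  have hsnd {a b : MvPolynomial (Fin 3) k} : b ∈ Ideal.span {a, b} := Ideal.subset_span (by simp)
  rintro p (rfl | rfl | rfl) q (rfl | rfl | rfl) hpq hle
  all_goals first | exact hpq rfl | skip
  · exact hω₀ (by simpa using hv₂ (hle hfst))
  · simpa using hv₃ (hle hfst)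
  · simpa using hv₁ (hle hfst)
  · have h : (1 : k) + 1 + 1 = 0 := by simpa using hv₃ (hle hsnd)
    exact h3 (by linear_combination h)
  · simpa using hv₁ (hle hfst)
  · exact hω₁ (by simpa using hv₂ (hle hsnd))

end Y0

theorem components_of_Y0_general (k : Type) [Field k] (hk : ∀ x : k, x ^ 2 ≠ -3) :
    (Ideal.span {A₀ k, B₀ k}).minimalPrimes =
      {Ideal.span {X 0, X 1 ^ 2 + 3 * X 2 ^ 2},
       Ideal.span {X 2, X 0 ^ 2 - X 0 * X 1 + X 1 ^ 2},
       Ideal.span {X 2, X 0 + X 1}} := by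
  have h2 : (2 : k) ≠ 0 := fun h => hk 1 (by linear_combination 2 * h)
  have h3 : (3 : k) ≠ 0 := by simpa using hk 0
  refine Ideal.minimalPrimes_eq_of_isAntichain (S := {Y0₁ k, Y0₂ k, Y0₃ k}) ?_
    (isAntichain_Y0 h3) fun _ => exists_Y0_le_of_isPrime h2
  intro p hp
  refine ⟨?_, span_A₀_B₀_le_Y0 k p hp⟩
  rcases hp with rfl | rfl | rfl
  exacts [isPrime_Y0₁ hk, isPrime_Y0₂ hk, isPrime_Y0₃]

/-- For `n = 1`, the scheme `Y⁰ = {Ā = B̄ = 0} ⊂ P²` has exactly three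
irreducible components `Y⁰₁ = {u₀ = u₁² + 3u₂² = 0}`, `Y⁰₂ = {u₂ = u₀² - u₀u₁ + u₁² = 0}`
and `Y⁰₃ = {u₂ = u₀ + u₁ = 0}`; i.e. the minimal primes over the ideal `(Ā, B̄)` are
exactly the ideals `(u₀, u₁² + 3u₂²)`, `(u₂, u₀² - u₀u₁ + u₁²)` and `(u₂, u₀ + u₁)`.
Here the base field `k` has characteristic zero and `-3` is not a square in `k` (so that
each of the first two components is irreducible over `k`, geometrically a pair of
conjugate points). -/
theorem components_of_Y0 (k : Type) [Field k] [CharZero k] (hk : ∀ x : k, x ^ 2 ≠ -3) :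
    (Ideal.span {A₀ k, B₀ k}).minimalPrimes =
      {Ideal.span {X 0, X 1 ^ 2 + 3 * X 2 ^ 2},
       Ideal.span {X 2, X 0 ^ 2 - X 0 * X 1 + X 1 ^ 2},
       Ideal.span {X 2, X 0 + X 1}} :=
  components_of_Y0_general k hk
end
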